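/- arXiv:1401.6160 — 3 statements merged into one kernel-verified Lean document; each statement's English description precedes it below -/
import Mathlib

section
/- Let M = [[A, B],[B^T, H]] be a symmetric n×n matrix over F_2 partitioned by an index subset J (so H is the J×J block). Let L be the row span of (M | Id_n) in F_2^{2n} with the standard symplectic pairing (e_i, f_j) = δ_{ij}, and let M_J be the composition of the swaps e_j ↔ f_j for j ∈ J. Then the subspace M_J(L) is transverse to (i.e., has zero intersection with) the span E of e_1,...,e_n if and only if H is invertible. -/
/-!
The rows of `(M | Id)` span the vectors `(c M, c)`. Such a vector is sent by `M_J` into `E`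
exactly when `c` vanishes off `J` and `c M` vanishes on `J`; for `c` vanishing off `J`, the
`J`-coordinates of `c M` are those of `c|_J H`. Since `M_J` is injective, `M_J(L) ∩ E = 0` says
that `H` has trivial left kernel, i.e. `det H ≠ 0`.
-/

/-- The partial-dual linear map `M_J` on `F_2^{2n}`, swapping the `e_j` and `f_j`
coordinates for every `j ∈ J` and fixing the others. -/
def MJ (n : ℕ) (J : Finset (Fin n)) :
    ((Fin n → ZMod 2) × (Fin n → ZMod 2)) →ₗ[ZMod 2]
      ((Fin n → ZMod 2) × (Fin n → ZMod 2)) where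
  toFun x := (fun k => if k ∈ J then x.2 k else x.1 k,
              fun k => if k ∈ J then x.1 k else x.2 k)
  map_add' x y := by
    refine Prod.ext ?_ ?_ <;> funext k <;> by_cases h : k ∈ J <;> simp [h]
  map_smul' c x := by
    refine Prod.ext ?_ ?_ <;> funext k <;> by_cases h : k ∈ J <;> simp [h]

open Matrix

section SupportedVectors

variable {R ι κ κ' : Type*} [Fintype ι]

theorem vecMul_submatrix_val_apply_of_support_subset [NonUnitalNonAssocSemiring R]
    {J : Finset ι} {c : ι → R} (hc : ∀ i ∉ J, c i = 0) (M : Matrix ι κ R) (f : κ' → κ)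
    (k : κ') : ((fun a : J => c a) ᵥ* M.submatrix (↑) f) k = (c ᵥ* M) (f k) := by
  simp only [vecMul, dotProduct, submatrix_apply]
  rw [← Finset.sum_subset J.subset_univ fun i _ hi => by rw [hc i hi, zero_mul]]
  exact (Finset.sum_subtype J (fun _ => Iff.rfl) fun i => c i * M i (f k)).symm

theorem supported_vecMul_eq_zero_on_imp_eq_zero_iff_det_submatrix_ne_zero [DecidableEq ι]
    [CommRing R] [IsDomain R] (M : Matrix ι ι R) (J : Finset ι) :
    (∀ c : ι → R, (∀ i ∉ J, c i = 0) → (∀ j ∈ J, (c ᵥ* M) j = 0) → c = 0) ↔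
      (M.submatrix ((↑) : J → ι) (↑)).det ≠ 0 := by
  rw [Ne, ← exists_vecMul_eq_zero_iff, ← not_iff_not, not_not]
  push Not
  constructor
  · rintro ⟨c, hcJ, hcM, hc0⟩
    refine ⟨fun a => c a, fun h => hc0 (funext fun i => ?_), funext fun j => ?_⟩
    · by_cases hi : i ∈ J
      · exact congrFun h ⟨i, hi⟩
      · exact hcJ i hi
    · rw [vecMul_submatrix_val_apply_of_support_subset hcJ]
      exact hcM j j.2
  · rintro ⟨d, hd0, hdM⟩
    let c : ι → R := fun i => if h : i ∈ J then d ⟨i, h⟩ else 0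
    have hcJ : ∀ i ∉ J, c i = 0 := fun i hi => dif_neg hi
    have hcd : (fun a : J => c a) = d := funext fun a => dif_pos a.2
    refine ⟨c, hcJ, fun j hj => ?_, fun h => hd0 ?_⟩
    · have := vecMul_submatrix_val_apply_of_support_subset hcJ M ((↑) : J → ι) ⟨j, hj⟩
      rwa [hcd, hdM, eq_comm] at this
    · rw [← hcd, h]
      rfl

theorem mem_span_range_prod_single_iff [Semiring R] [DecidableEq ι] {M : Matrix ι ι R}
    {x : (ι → R) × (ι → R)} :
    x ∈ Submodule.span R (Set.range fun i => (M i, Pi.single i 1)) ↔ ∃ c, (c ᵥ* M, c) = x := by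
  rw [Submodule.mem_span_range_iff_exists_fun]
  refine exists_congr fun c => Eq.congr_left (Prod.ext (funext fun k => ?_) (funext fun k => ?_))
  · simp [vecMul, dotProduct, Prod.fst_sum, Finset.sum_apply]
  · simp [Prod.snd_sum, Finset.sum_apply, Pi.single_apply]

end SupportedVectors

theorem MJ_MJ (n : ℕ) (J : Finset (Fin n)) (x : (Fin n → ZMod 2) × (Fin n → ZMod 2)) :
    MJ n J (MJ n J x) = x := by
  ext k <;> by_cases hk : k ∈ J <;> simp [MJ, hk]

theorem MJ_injective (n : ℕ) (J : Finset (Fin n)) : Function.Injective (MJ n J) :=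
  Function.LeftInverse.injective (MJ_MJ n J)

theorem MJ_snd_eq_zero_iff {n : ℕ} {J : Finset (Fin n)}
    {x : (Fin n → ZMod 2) × (Fin n → ZMod 2)} :
    (MJ n J x).2 = 0 ↔ (∀ j ∈ J, x.1 j = 0) ∧ ∀ i ∉ J, x.2 i = 0 := by
  simp only [MJ, LinearMap.coe_mk, AddHom.coe_mk, funext_iff, Pi.zero_apply]
  constructor
  · intro h
    exact ⟨fun j hj => by simpa [hj] using h j, fun i hi => by simpa [hi] using h i⟩
  · rintro ⟨h₁, h₂⟩ k
    by_cases hk : k ∈ J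
    · simpa [hk] using h₁ k hk
    · simpa [hk] using h₂ k hk

theorem map_MJ_inf_range_inl_eq_bot_iff (n : ℕ) (M : Matrix (Fin n) (Fin n) (ZMod 2))
    (J : Finset (Fin n)) :
    (Submodule.span (ZMod 2) (Set.range fun i => (M i, Pi.single i 1))).map (MJ n J) ⊓
        LinearMap.range (LinearMap.inl (ZMod 2) (Fin n → ZMod 2) (Fin n → ZMod 2)) = ⊥ ↔
      ∀ c : Fin n → ZMod 2, (∀ i ∉ J, c i = 0) → (∀ j ∈ J, (c ᵥ* M) j = 0) → c = 0 := by
  simp only [Submodule.eq_bot_iff, Submodule.mem_inf, Submodule.mem_map,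
    mem_span_range_prod_single_iff, LinearMap.range_inl, LinearMap.mem_ker, LinearMap.snd_apply]
  constructor
  · intro h c hcJ hcM
    have h0 := h _ ⟨⟨_, ⟨c, rfl⟩, rfl⟩, MJ_snd_eq_zero_iff.mpr ⟨hcM, hcJ⟩⟩
    exact congrArg Prod.snd (MJ_injective n J (h0.trans (map_zero _).symm))
  · rintro h _ ⟨⟨_, ⟨c, rfl⟩, rfl⟩, hE⟩
    obtain ⟨hcM, hcJ⟩ := MJ_snd_eq_zero_iff.mp hE
    rw [h c hcJ hcM, zero_vecMul, Prod.mk_zero_zero, map_zero]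

theorem stmt10_general (n : ℕ) (M : Matrix (Fin n) (Fin n) (ZMod 2))
    (J : Finset (Fin n)) :
    let r : Fin n → (Fin n → ZMod 2) × (Fin n → ZMod 2) := fun i => (M i, Pi.single i 1)
    let L := Submodule.span (ZMod 2) (Set.range r)
    let Esub := LinearMap.range (LinearMap.inl (ZMod 2) (Fin n → ZMod 2) (Fin n → ZMod 2))
    let H : Matrix J J (ZMod 2) := fun a b => M a.1 b.1
    L.map (MJ n J) ⊓ Esub = ⊥ ↔ IsUnit H := by
  intro r L Esub H
  rw [map_MJ_inf_range_inl_eq_bot_iff, isUnit_iff_isUnit_det, isUnit_iff_ne_zero]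
  exact supported_vecMul_eq_zero_on_imp_eq_zero_iff_det_submatrix_ne_zero M J

/-- Cohn–Lempel in L-space form: let `L` be the row span of `(M | Id_n)`
for a symmetric matrix `M`, and `J` a set of indices. Then `M_J(L)` is transverse to
`E = span(e_1,…,e_n)` (zero intersection) iff the `J×J` submatrix `H` of `M` is invertible. -/
theorem stmt10 (n : ℕ) (M : Matrix (Fin n) (Fin n) (ZMod 2)) (hM : M.IsSymm)
    (J : Finset (Fin n)) :
    let r : Fin n → (Fin n → ZMod 2) × (Fin n → ZMod 2) := fun i => (M i, Pi.single i 1)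
    let L := Submodule.span (ZMod 2) (Set.range r)
    let Esub := LinearMap.range (LinearMap.inl (ZMod 2) (Fin n → ZMod 2) (Fin n → ZMod 2))
    let H : Matrix J J (ZMod 2) := fun a b => M a.1 b.1
    L.map (MJ n J) ⊓ Esub = ⊥ ↔ IsUnit H :=
  stmt10_general n M J
end

section
/- Local complementation formula: let A be a symmetric n×n matrix over F_2 with A_{aa} = 1 for some index a, and write A = [[M', v_a],[v_a^T, 1]] with a as the last index. Then the swap M_a applied to the row span of (Id_n | A) yields a subspace which is again the row span of (Id_n | A'), where A' = [[M' + v_a v_a^T, v_a],[v_a^T, 1]], which is symmetric. -/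
/-- local complementation: let `A` be symmetric over `F_2` with
`A a a = 1`, and `v` its `a`-th column. Applying the swap `M_a` to the row span of
`(Id_n | A)` yields the row span of `(Id_n | A')`, where `A'` agrees with `A` on all
entries in row or column `a` and equals `A + v vᵀ` elsewhere (the matrix
`[[M' + v_a v_aᵀ, v_a],[v_aᵀ, 1]]` of the Example); moreover `A'` is symmetric. -/
theorem stmt12 (n : ℕ) (a : Fin n) (A : Matrix (Fin n) (Fin n) (ZMod 2))
    (hA : A.IsSymm) (ha : A a a = 1) :
    let v : Fin n → ZMod 2 := fun i => A i a
    let A' : Matrix (Fin n) (Fin n) (ZMod 2) := fun i j =>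
      if i = a ∨ j = a then A i j else A i j + v i * v j
    Submodule.map (MJ n {a})
        (Submodule.span (ZMod 2) (Set.range fun i => ((Pi.single i 1, A i) :
          (Fin n → ZMod 2) × (Fin n → ZMod 2)))) =
      Submodule.span (ZMod 2) (Set.range fun i => ((Pi.single i 1, A' i) :
          (Fin n → ZMod 2) × (Fin n → ZMod 2))) ∧
    A'.IsSymm := by
  intro v A'
  have htwo : ∀ x : ZMod 2, x + x = 0 := by decide
  have hsymm : ∀ i j, A i j = A j i := fun i j => hA.apply j i
  have hA'a : ∀ k, A' a k = A a k := fun k => if_pos (Or.inl rfl)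
  have key : ∀ i, MJ n {a} (Pi.single i 1, A i) =
      (Pi.single i 1, A' i) +
        (if i = a then 0 else A i a) • ((Pi.single a 1, A' a) :
          (Fin n → ZMod 2) × (Fin n → ZMod 2)) := by
    intro i
    refine Prod.ext (funext fun k => ?_) (funext fun k => ?_) <;>
      simp only [MJ, LinearMap.coe_mk, AddHom.coe_mk, Finset.mem_singleton,
        Prod.fst_add, Prod.snd_add, Prod.smul_fst, Prod.smul_snd, Pi.add_apply,
        Pi.smul_apply, smul_eq_mul] <;>
      rcases eq_or_ne k a with hk | hk <;> rcases eq_or_ne i a with hi | hi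
    · subst hk hi; simp [ha]
    · subst hk; simp [hi, Pi.single_eq_of_ne hi]
    · subst hi; simp [hk, Pi.single_eq_of_ne hk]
    · simp [hk, hi, Pi.single_eq_of_ne hk]
    · subst hk hi; simp [hA'a, ha]
    · rw [if_pos hk, if_neg hi, hk, Pi.single_eq_of_ne (Ne.symm hi)]
      simp [A', ha, htwo]
    · subst hi; simp [hk, hA'a, Ne.symm hk, Pi.single_eq_of_ne (Ne.symm hk)]
    · have h1 : A' i k = A i k + A i a * A k a := by
        simp only [A']; rw [if_neg]; push_neg; exact ⟨hi, hk⟩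
      rw [if_neg hk, if_neg hi, h1, hA'a, hsymm a k, add_assoc, htwo, add_zero]
  have haa : MJ n {a} (Pi.single a 1, A a) = (Pi.single a 1, A' a) := by
    have := key a; simpa using this
  constructor
  · rw [Submodule.map_span]
    apply le_antisymm
    · rw [Submodule.span_le]
      rintro x ⟨y, ⟨i, rfl⟩, rfl⟩
      show MJ n {a} (Pi.single i 1, A i) ∈ _
      rw [key i]
      exact Submodule.add_mem _ (Submodule.subset_span ⟨i, rfl⟩)
        (Submodule.smul_mem _ _ (Submodule.subset_span ⟨a, rfl⟩))
    · rw [Submodule.span_le]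
      rintro x ⟨i, rfl⟩
      have h1 : ((Pi.single i 1, A' i) : (Fin n → ZMod 2) × (Fin n → ZMod 2)) =
          MJ n {a} (Pi.single i 1, A i) -
            (if i = a then 0 else A i a) • MJ n {a} (Pi.single a 1, A a) := by
        rw [haa, key i]; abel
      show ((Pi.single i 1, A' i) : (Fin n → ZMod 2) × (Fin n → ZMod 2)) ∈ _
      rw [h1]
      exact Submodule.sub_mem _
        (Submodule.subset_span ⟨_, ⟨i, rfl⟩, rfl⟩)
        (Submodule.smul_mem _ _ (Submodule.subset_span ⟨_, ⟨a, rfl⟩, rfl⟩))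
  · rw [Matrix.IsSymm]
    ext i j
    rw [Matrix.transpose_apply]; simp only [A']
    by_cases h : i = a ∨ j = a
    · rw [if_pos (Or.symm h), if_pos h, hsymm j i]
    · rw [if_neg (h ∘ Or.symm), if_neg h, hsymm j i, mul_comm]
end

section
/- Pivot formula: let A = [[M', v_a, v_b],[v_a^T, 0, 1],[v_b^T, 1, 0]] be a symmetric n×n matrix over F_2 (with a, b the last two indices, A_{aa} = A_{bb} = 0, A_{ab} = 1). Then applying M_a ∘ M_b (swapping e_a ↔ f_a and e_b ↔ f_b) to the row span of (Id_n | A) gives the row span of (Id_n | A'), where A' = [[M' + v_a v_b^T + v_b v_a^T, v_b, v_a],[v_b^T, 0, 1],[v_a^T, 1, 0]]. -/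
lemma char2_aux {M : Type*} [AddCommGroup M] [Module (ZMod 2) M] (v w u : M) :
    v = v + w + u + w + u := by
  have h : ∀ x : M, x + x = 0 := fun x => by
    rw [← two_smul (ZMod 2) x, show (2 : ZMod 2) = 0 from rfl, zero_smul]
  rw [show v + w + u + w + u = v + (w + w) + (u + u) by abel, h, h, add_zero, add_zero]

/-- pivot formula: let `A` be symmetric over `F_2` with
`A a a = A b b = 0`, `A a b = 1` (`a ≠ b`). Applying `M_a ∘ M_b` (i.e. `M_{{a,b}}`) to
the row span of `(Id_n | A)` gives the row span of `(Id_n | A')`, where, writing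
`σ = (a b)`, the entries of `A'` in the rows/columns `a, b` are those of `A` with the
roles of `a` and `b` interchanged (columns `v_a`, `v_b` swapped), and for `i, j ∉ {a,b}`
one has `A' i j = A i j + A i a * A b j + A i b * A a j`
(the matrix `[[M' + v_a v_bᵀ + v_b v_aᵀ, v_b, v_a],[v_bᵀ,0,1],[v_aᵀ,1,0]]`). -/
theorem stmt13 (n : ℕ) (a b : Fin n) (hab : a ≠ b) (A : Matrix (Fin n) (Fin n) (ZMod 2))
    (hA : A.IsSymm) (haa : A a a = 0) (hbb : A b b = 0) (hab1 : A a b = 1) :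
    let σ := Equiv.swap a b
    let A' : Matrix (Fin n) (Fin n) (ZMod 2) := fun i j =>
      if i = a ∨ i = b ∨ j = a ∨ j = b then A (σ i) (σ j)
      else A i j + A i a * A b j + A i b * A a j
    Submodule.map (MJ n {a, b})
        (Submodule.span (ZMod 2) (Set.range fun i => ((Pi.single i 1, A i) :
          (Fin n → ZMod 2) × (Fin n → ZMod 2)))) =
      Submodule.span (ZMod 2) (Set.range fun i => ((Pi.single i 1, A' i) :
          (Fin n → ZMod 2) × (Fin n → ZMod 2))) := by
  intro σ A'
  have hba1 : A b a = 1 := by rw [hA.apply, hab1]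
  have hbab : b ≠ a := hab.symm
  have hMa : (MJ n {a, b}) (Pi.single a 1, A a) = (Pi.single b 1, A' b) := by
    refine Prod.ext ?_ ?_ <;> funext k <;>
      simp only [MJ, LinearMap.coe_mk, AddHom.coe_mk, Finset.mem_insert,
        Finset.mem_singleton, A', σ] <;>
      by_cases hka : k = a <;> by_cases hkb : k = b <;>
      simp_all [Pi.single_apply, Equiv.swap_apply_of_ne_of_ne, hab, hbab]
  have hMb : (MJ n {a, b}) (Pi.single b 1, A b) = (Pi.single a 1, A' a) := by
    refine Prod.ext ?_ ?_ <;> funext k <;>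
      simp only [MJ, LinearMap.coe_mk, AddHom.coe_mk, Finset.mem_insert,
        Finset.mem_singleton, A', σ] <;>
      by_cases hka : k = a <;> by_cases hkb : k = b <;>
      simp_all [Pi.single_apply, Equiv.swap_apply_of_ne_of_ne, hab, hbab]
  have hMi : ∀ i : Fin n, i ≠ a → i ≠ b →
      (MJ n {a, b}) (Pi.single i 1, A i) =
        (Pi.single i 1, A' i) + A i a • (Pi.single a 1, A' a)
          + A i b • (Pi.single b 1, A' b) := by
    intro i hia hib
    refine Prod.ext ?_ ?_ <;> funext k <;>
      simp only [MJ, LinearMap.coe_mk, AddHom.coe_mk, Finset.mem_insert,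
        Finset.mem_singleton, Prod.fst_add, Prod.snd_add, Prod.smul_fst, Prod.smul_snd,
        Pi.add_apply, Pi.smul_apply, smul_eq_mul, A', σ] <;>
      by_cases hka : k = a <;> by_cases hkb : k = b <;>
      simp_all [Pi.single_apply, Equiv.swap_apply_of_ne_of_ne, hab, hbab] <;>
      first
        | rfl
        | (ring_nf; simp [show (2 : ZMod 2) = 0 from rfl])
  rw [Submodule.map_span]
  apply le_antisymm
  · rw [Submodule.span_le]
    rintro _ ⟨_, ⟨i, rfl⟩, rfl⟩
    dsimp only
    rcases eq_or_ne i a with hia | hia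
    · rw [hia, hMa]; exact Submodule.subset_span ⟨b, rfl⟩
    rcases eq_or_ne i b with hib | hib
    · rw [hib, hMb]; exact Submodule.subset_span ⟨a, rfl⟩
    · rw [hMi i hia hib]
      exact add_mem (add_mem (Submodule.subset_span ⟨i, rfl⟩)
        (Submodule.smul_mem _ _ (Submodule.subset_span ⟨a, rfl⟩)))
        (Submodule.smul_mem _ _ (Submodule.subset_span ⟨b, rfl⟩))
  · rw [Submodule.span_le]
    rintro _ ⟨i, rfl⟩
    dsimp only
    have mem : ∀ j : Fin n, (MJ n {a, b}) (Pi.single j 1, A j) ∈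
        Submodule.span (ZMod 2) ((MJ n {a, b}) '' (Set.range fun i =>
          ((Pi.single i 1, A i) : (Fin n → ZMod 2) × (Fin n → ZMod 2)))) :=
      fun j => Submodule.subset_span ⟨_, ⟨j, rfl⟩, rfl⟩
    rcases eq_or_ne i a with hia | hia
    · rw [hia, ← hMb]; exact mem b
    rcases eq_or_ne i b with hib | hib
    · rw [hib, ← hMa]; exact mem a
    · have key : ((Pi.single i 1, A' i) : (Fin n → ZMod 2) × (Fin n → ZMod 2)) =
        (MJ n {a, b}) (Pi.single i 1, A i)
          + A i a • (MJ n {a, b}) (Pi.single b 1, A b)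
          + A i b • (MJ n {a, b}) (Pi.single a 1, A a) := by
        rw [hMa, hMb, hMi i hia hib]
        exact char2_aux _ _ _
      rw [key]
      exact add_mem (add_mem (mem i) (Submodule.smul_mem _ _ (mem b)))
        (Submodule.smul_mem _ _ (mem a))
end
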